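/- arXiv:1805.11891 — 9 statements merged into one kernel-verified Lean document; each statement's English description precedes it below -/
import Mathlib

section
/- The join semilattice M(B) of modal operators on a Boolean algebra B is a complete semilattice (every nonempty subset has a supremum) if and only if B is a complete Boolean algebra. -/
/-- A modal operator on a Boolean algebra: normal and additive. -/
def IsModal {α : Type*} [BooleanAlgebra α] (f : α → α) : Prop :=
  f ⊥ = ⊥ ∧ ∀ x y : α, f (x ⊔ y) = f x ⊔ f y

/-- The semilattice of modal operators (ordered pointwise) is complete, i.e. every
nonempty family of modal operators has a least upper bound among modal operators,
iff the Boolean algebra is complete, i.e. every subset has a supremum. -/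
theorem modal_semilattice_complete_iff_complete {α : Type*} [BooleanAlgebra α] [Nontrivial α] :
    (∀ Q : Set (α → α), Q.Nonempty → (∀ f ∈ Q, IsModal f) →
      ∃ g : α → α, IsModal g ∧ (∀ f ∈ Q, f ≤ g) ∧
        ∀ h : α → α, IsModal h → (∀ f ∈ Q, f ≤ h) → g ≤ h) ↔
    (∀ M : Set α, ∃ s : α, IsLUB M s) := by
  classical
  constructor
  · intro H M
    set c : α → α → α := fun a x => if x = ⊥ then ⊥ else a with hc
    have hmodal : ∀ a : α, IsModal (c a) := by
      intro a
      refine ⟨by simp [hc], ?_⟩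
      intro x y
      by_cases hx : x = ⊥ <;> by_cases hy : y = ⊥ <;>
        simp [hc, hx, hy, sup_eq_bot_iff]
    set Q : Set (α → α) := insert (fun _ => ⊥) (c '' M) with hQ
    have hQmodal : ∀ f ∈ Q, IsModal f := by
      rintro f (rfl | ⟨a, _, rfl⟩)
      · exact ⟨rfl, by simp⟩
      · exact hmodal a
    obtain ⟨g, hg, hub, hlst⟩ := H Q ⟨_, Set.mem_insert _ _⟩ hQmodal
    refine ⟨g ⊤, ?_, ?_⟩
    · intro a ha
      have := hub (c a) (Set.mem_insert_of_mem _ ⟨a, ha, rfl⟩) ⊤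
      simpa [hc, top_ne_bot] using this
    · intro u hu
      have hle : g ≤ c u := by
        refine hlst (c u) (hmodal u) ?_
        rintro f (rfl | ⟨a, haM, rfl⟩)
        · intro x; exact bot_le
        · intro x
          by_cases hx : x = ⊥
          · simp [hc, hx]
          · simpa [hc, hx] using hu haM
      have := hle ⊤
      simpa [hc, top_ne_bot] using this
  · intro H Q ⟨f₀, hf₀⟩ hQmodal
    choose s hs using H
    refine ⟨fun x => s ((fun f => f x) '' Q), ⟨?_, ?_⟩, ?_, ?_⟩
    · have hlub := hs ((fun f => f ⊥) '' Q)
      have hub : ⊥ ∈ upperBounds ((fun f => f ⊥) '' Q) := by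
        rintro y ⟨f, hf, rfl⟩
        show f ⊥ ≤ ⊥
        rw [(hQmodal f hf).1]
      exact le_antisymm (hlub.2 hub) bot_le
    · intro x y
      have hx := hs ((fun f => f x) '' Q)
      have hy := hs ((fun f => f y) '' Q)
      have hxy := hs ((fun f => f (x ⊔ y)) '' Q)
      refine le_antisymm ?_ (sup_le ?_ ?_)
      · refine hxy.2 ?_
        rintro z ⟨f, hf, rfl⟩
        show f (x ⊔ y) ≤ _
        rw [(hQmodal f hf).2 x y]
        exact sup_le_sup (hx.1 ⟨f, hf, rfl⟩) (hy.1 ⟨f, hf, rfl⟩)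
      · refine hx.2 ?_
        rintro z ⟨f, hf, rfl⟩
        calc f x ≤ f (x ⊔ y) := by rw [(hQmodal f hf).2 x y]; exact le_sup_left
          _ ≤ _ := hxy.1 ⟨f, hf, rfl⟩
      · refine hy.2 ?_
        rintro z ⟨f, hf, rfl⟩
        calc f y ≤ f (x ⊔ y) := by rw [(hQmodal f hf).2 x y]; exact le_sup_right
          _ ≤ _ := hxy.1 ⟨f, hf, rfl⟩
    · intro f hf x
      exact (hs _).1 ⟨f, hf, rfl⟩
    · intro h _ hh x
      refine (hs _).2 ?_
      rintro z ⟨f, hf, rfl⟩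
      exact hh f hf x
end

section
/- If a modal operator f on a Boolean algebra B has a dual pseudocomplement f⊥ in the join semilattice M(B) of modal operators, then for every x ∈ B with x ≠ 0, the supremum of the set { -f(y) : 0 < y ≤ x } exists in B and equals f⊥(x). -/
open Classical

/-- `g` is a companion of `f`: their join is the unary discriminator. -/
def IsCompanion {α : Type*} [BooleanAlgebra α] (f g : α → α) : Prop :=
  ∀ x : α, x ≠ ⊥ → f x ⊔ g x = ⊤

/-- `g` is the dual pseudocomplement of `f` in the semilattice of modal operators:
the least modal operator whose join with `f` is the unary discriminator. -/
def IsDualPC {α : Type*} [BooleanAlgebra α] (f g : α → α) : Prop :=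
  IsModal g ∧ IsCompanion f g ∧
    ∀ h : α → α, IsModal h → IsCompanion f h → g ≤ h

lemma modal_mono {α : Type*} [BooleanAlgebra α] {f : α → α} (hf : IsModal f)
    {a b : α} (h : a ≤ b) : f a ≤ f b := by
  have : f b = f a ⊔ f b := by
    rw [← hf.2, sup_eq_right.mpr h]
  rw [this]; exact le_sup_left

lemma compl_le_of_sup_top {α : Type*} [BooleanAlgebra α] {a b : α}
    (h : a ⊔ b = ⊤) : aᶜ ≤ b := by
  calc aᶜ = aᶜ ⊓ (a ⊔ b) := by rw [h, inf_top_eq]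
    _ = aᶜ ⊓ a ⊔ aᶜ ⊓ b := inf_sup_left _ _ _
    _ ≤ b := by simp

/-- If a modal operator `f` has a dual pseudocomplement `g`, then for every `x ≠ ⊥`,
`g x` is the supremum of `{ (f y)ᶜ : ⊥ < y ≤ x }`. -/
theorem dualPC_is_lub {α : Type*} [BooleanAlgebra α] (f g : α → α)
    (hf : IsModal f) (hg : IsDualPC f g) :
    ∀ x : α, x ≠ ⊥ → IsLUB {z : α | ∃ y : α, y ≠ ⊥ ∧ y ≤ x ∧ z = (f y)ᶜ} (g x) := by
  obtain ⟨hgm, hgc, hgl⟩ := hg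
  intro x hx
  constructor
  · rintro z ⟨y, hy0, hyx, rfl⟩
    exact le_trans (compl_le_of_sup_top (hgc y hy0)) (modal_mono hgm hyx)
  · intro b hb
    set h : α → α := fun t => g (t ⊓ xᶜ) ⊔ (if t ⊓ x = ⊥ then ⊥ else b) with hh
    have hhm : IsModal h := by
      constructor
      · simp [hh, hgm.1]
      · intro s t
        have hind : (if (s ⊔ t) ⊓ x = ⊥ then (⊥:α) else b)
            = (if s ⊓ x = ⊥ then (⊥:α) else b) ⊔ (if t ⊓ x = ⊥ then (⊥:α) else b) := by
          rw [inf_sup_right]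
          by_cases hs : s ⊓ x = ⊥ <;> by_cases ht : t ⊓ x = ⊥ <;>
            simp [hs, ht]
        show g ((s ⊔ t) ⊓ xᶜ) ⊔ (if (s ⊔ t) ⊓ x = ⊥ then ⊥ else b)
            = (g (s ⊓ xᶜ) ⊔ (if s ⊓ x = ⊥ then ⊥ else b))
              ⊔ (g (t ⊓ xᶜ) ⊔ (if t ⊓ x = ⊥ then ⊥ else b))
        rw [inf_sup_right, hgm.2, hind]
        ac_rfl
    have hhc : IsCompanion f h := by
      intro t ht
      show f t ⊔ (g (t ⊓ xᶜ) ⊔ (if t ⊓ x = ⊥ then ⊥ else b)) = ⊤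
      by_cases htx : t ⊓ x = ⊥
      · have htc : t ≤ xᶜ := le_compl_iff_disjoint_right.mpr (disjoint_iff.mpr htx)
        rw [if_pos htx, inf_eq_left.mpr htc, sup_bot_eq]
        exact hgc t ht
      · have hbge : (f (t ⊓ x))ᶜ ≤ b := hb ⟨t ⊓ x, htx, inf_le_right, rfl⟩
        have htop : f (t ⊓ x) ⊔ b = ⊤ := by
          rw [eq_top_iff, ← sup_compl_eq_top (x := f (t ⊓ x))]
          exact sup_le_sup_left hbge _
        rw [if_neg htx, eq_top_iff, ← htop]
        exact sup_le_sup (modal_mono hf inf_le_left) le_sup_right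
    have hle := hgl h hhm hhc x
    show g x ≤ b
    have : h x = b := by
      show g (x ⊓ xᶜ) ⊔ (if x ⊓ x = ⊥ then ⊥ else b) = b
      rw [inf_compl_eq_bot, hgm.1, if_neg (by simpa using hx), bot_sup_eq]
    rw [← this]; exact hle
end

section
/- Let f be a modal operator on a Boolean algebra B. If for every x ∈ B with x ≠ 0 the supremum ∑{ -f(y) : 0 < y ≤ x } exists in B, then the map g defined by g(0) = 0 and g(x) = ∑{ -f(y) : 0 < y ≤ x } for x ≠ 0 is a modal operator and is the dual pseudocomplement of f in M(B). -/
open Classical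

/-- If for every `x ≠ ⊥` the supremum of `{ (f y)ᶜ : ⊥ < y ≤ x }` exists in `B`, then
the map `g` sending `⊥` to `⊥` and `x ≠ ⊥` to this supremum is a modal operator and is the
dual pseudocomplement of `f`. -/
theorem lub_gives_dualPC {α : Type*} [BooleanAlgebra α] (f g : α → α)
    (hf : IsModal f) (hg0 : g ⊥ = ⊥)
    (hg : ∀ x : α, x ≠ ⊥ → IsLUB {z : α | ∃ y : α, y ≠ ⊥ ∧ y ≤ x ∧ z = (f y)ᶜ} (g x)) :
    IsDualPC f g := by
  -- monotonicity of g on nonbot elements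
  have gmono : ∀ x y : α, x ≠ ⊥ → y ≠ ⊥ → x ≤ y → g x ≤ g y := by
    intro x y hx hy hxy
    refine (hg x hx).2 ?_
    rintro z ⟨u, hu, hux, rfl⟩
    exact (hg y hy).1 ⟨u, hu, hux.trans hxy, rfl⟩
  have gmodal : IsModal g := by
    refine ⟨hg0, ?_⟩
    intro x y
    by_cases hx : x = ⊥
    · simp [hx, hg0]
    by_cases hy : y = ⊥
    · simp [hy, hg0]
    have hxy : x ⊔ y ≠ ⊥ := by
      intro h
      exact hx (le_bot_iff.mp (le_sup_left.trans h.le))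
    refine le_antisymm ?_ ?_
    · refine (hg _ hxy).2 ?_
      rintro z ⟨u, hu, hux, rfl⟩
      have hdecomp : u = (u ⊓ x) ⊔ (u ⊓ y) := by
        rw [← inf_sup_left, inf_eq_left.mpr hux]
      have hfu : f u = f (u ⊓ x) ⊔ f (u ⊓ y) := by
        conv_lhs => rw [hdecomp]
        exact hf.2 _ _
      have hcase : u ⊓ x ≠ ⊥ ∨ u ⊓ y ≠ ⊥ := by
        by_contra hc
        push_neg at hc
        apply hu
        rw [hdecomp, hc.1, hc.2, sup_idem]
      rcases hcase with hc | hc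
      · have h1 : (f u)ᶜ ≤ (f (u ⊓ x))ᶜ := by
          apply compl_le_compl
          rw [hfu]; exact le_sup_left
        have h2 : (f (u ⊓ x))ᶜ ≤ g x := (hg x hx).1 ⟨u ⊓ x, hc, inf_le_right, rfl⟩
        exact le_sup_of_le_left (h1.trans h2)
      · have h1 : (f u)ᶜ ≤ (f (u ⊓ y))ᶜ := by
          apply compl_le_compl
          rw [hfu]; exact le_sup_right
        have h2 : (f (u ⊓ y))ᶜ ≤ g y := (hg y hy).1 ⟨u ⊓ y, hc, inf_le_right, rfl⟩
        exact le_sup_of_le_right (h1.trans h2)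
    · exact sup_le (gmono x _ hx hxy le_sup_left) (gmono y _ hy hxy le_sup_right)
  refine ⟨gmodal, ?_, ?_⟩
  · intro x hx
    have h1 : (f x)ᶜ ≤ g x := (hg x hx).1 ⟨x, hx, le_rfl, rfl⟩
    have := sup_le_sup_left h1 (f x)
    rw [sup_compl_eq_top] at this
    exact top_le_iff.mp this
  · intro h hh hch x
    by_cases hx : x = ⊥
    · simp [hx, hg0]
    refine (hg x hx).2 ?_
    rintro z ⟨u, hu, hux, rfl⟩
    have h1 : (f u)ᶜ ≤ h u := by
      have := hch u hu
      calc (f u)ᶜ = (f u)ᶜ ⊓ (f u ⊔ h u) := by rw [this, inf_top_eq]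
        _ = ((f u)ᶜ ⊓ f u) ⊔ ((f u)ᶜ ⊓ h u) := inf_sup_left _ _ _
        _ ≤ h u := by simp
    have h2 : h u ≤ h x := by
      have : h x = h u ⊔ h x := by
        rw [← hh.2, sup_eq_right.mpr hux]
      rw [this]; exact le_sup_left
    exact h1.trans h2
end

section
/- The join semilattice M(B) of modal operators on a Boolean algebra B is dually pseudocomplemented (every element has a dual pseudocomplement) if and only if B is complete. -/
open Classical

section Aux

variable {α : Type*} [BooleanAlgebra α]

lemma IsModal.mono' {f : α → α} (hf : IsModal f) {a b : α} (h : a ≤ b) : f a ≤ f b := by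
  have h2 := hf.2 a b
  rw [sup_eq_right.mpr h] at h2
  rw [h2]; exact le_sup_left

lemma compl_le_of_sup_eq_top {a b : α} (h : a ⊔ b = ⊤) : aᶜ ≤ b := by
  have : aᶜ = aᶜ ⊓ (a ⊔ b) := by rw [h, inf_top_eq]
  rw [this, inf_sup_left, inf_comm, inf_compl_eq_bot, bot_sup_eq]
  exact inf_le_right

/-- Backward direction: completeness gives dual pseudocomplements. -/
lemma dpc_of_complete (H : ∀ M : Set α, ∃ s : α, IsLUB M s)
    (f : α → α) (hf : IsModal f) : ∃ g : α → α, IsDualPC f g := by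
  set S : α → Set α := fun x => {b | ∃ y : α, y ≠ ⊥ ∧ y ≤ x ∧ b = (f y)ᶜ} with hS
  choose g hg using fun x => H (S x)
  have hSmono : ∀ {x y : α}, x ≤ y → S x ⊆ S y := by
    rintro x y hxy b ⟨z, h1, h2, h3⟩
    exact ⟨z, h1, h2.trans hxy, h3⟩
  have hgmono : ∀ {x y : α}, x ≤ y → g x ≤ g y := by
    intro x y hxy
    exact (hg x).2 (fun b hb => (hg y).1 (hSmono hxy hb))
  have hgmodal : IsModal g := by
    constructor
    · have hempty : S ⊥ = ∅ := by
        ext b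
        simp only [hS, Set.mem_setOf_eq, Set.mem_empty_iff_false, iff_false]
        rintro ⟨y, h1, h2, h3⟩
        exact h1 (le_bot_iff.mp h2)
      have h1 := hg ⊥
      rw [hempty] at h1
      exact le_antisymm (h1.2 (fun b hb => hb.elim)) bot_le
    · intro x y
      have hub : g x ⊔ g y ∈ upperBounds (S (x ⊔ y)) := by
        rintro b ⟨z, hz, hzle, rfl⟩
        have hz2 : z = (z ⊓ x) ⊔ (z ⊓ y) := by
          rw [← inf_sup_left]; exact (inf_eq_left.mpr hzle).symm
        have hfz : (f z)ᶜ ≤ (f (z ⊓ x))ᶜ ⊓ (f (z ⊓ y))ᶜ := by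
          conv_lhs => rw [hz2]
          rw [hf.2, compl_sup]
        by_cases hx : z ⊓ x = ⊥
        · have hy' : z ⊓ y ≠ ⊥ := by
            intro hy'
            apply hz
            rw [hz2, hx, hy', sup_idem]
          have hmem : (f (z ⊓ y))ᶜ ∈ S y := ⟨z ⊓ y, hy', inf_le_right, rfl⟩
          exact le_trans (hfz.trans inf_le_right) (le_trans ((hg y).1 hmem) le_sup_right)
        · have hmem : (f (z ⊓ x))ᶜ ∈ S x := ⟨z ⊓ x, hx, inf_le_right, rfl⟩
          exact le_trans (hfz.trans inf_le_left) (le_trans ((hg x).1 hmem) le_sup_left)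
      have hlb : ∀ u ∈ upperBounds (S (x ⊔ y)), g x ⊔ g y ≤ u := by
        intro u hu
        exact sup_le ((hg x).2 (fun b hb => hu (hSmono le_sup_left hb)))
          ((hg y).2 (fun b hb => hu (hSmono le_sup_right hb)))
      exact (hg (x ⊔ y)).unique ⟨hub, hlb⟩
  refine ⟨g, hgmodal, ?_, ?_⟩
  · intro x hx
    have h1 : (f x)ᶜ ≤ g x := (hg x).1 ⟨x, hx, le_rfl, rfl⟩
    exact top_le_iff.mp (by rw [← sup_compl_eq_top (x := f x)]; exact sup_le_sup_left h1 _)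
  · intro h hh hch x
    apply (hg x).2
    rintro b ⟨y, hy, hyx, rfl⟩
    exact le_trans (compl_le_of_sup_eq_top (hch y hy)) (hh.mono' hyx)

/-- The modal operator built from a pairwise-disjoint family `D`. -/
noncomputable def dpcF (D : Set α) (y : α) : α :=
  if y = ⊥ then ⊥
  else if h : ∃ d ∈ D, y ≤ d then (Classical.choose h)ᶜ
  else ⊤

lemma dpcF_bot (D : Set α) : dpcF D (⊥ : α) = ⊥ := by simp [dpcF]

lemma dpcF_val {D : Set α} (hD : D.Pairwise (fun a b => a ⊓ b = ⊥))
    {y d : α} (hy : y ≠ ⊥) (hd : d ∈ D) (hyd : y ≤ d) : dpcF D y = dᶜ := by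
  have h : ∃ d ∈ D, y ≤ d := ⟨d, hd, hyd⟩
  have hd' := Classical.choose_spec h
  have heq : Classical.choose h = d := by
    by_contra hne
    have := hD hd'.1 hd hne
    exact hy (le_bot_iff.mp (this ▸ le_inf hd'.2 hyd))
  simp [dpcF, hy, dif_pos h, heq]

lemma dpcF_top {D : Set α} {y : α} (hy : y ≠ ⊥) (h : ¬∃ d ∈ D, y ≤ d) :
    dpcF D y = ⊤ := by simp [dpcF, hy, h]

lemma dpcF_modal {D : Set α} (hD : D.Pairwise (fun a b => a ⊓ b = ⊥)) :
    IsModal (dpcF D) := by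
  refine ⟨dpcF_bot D, ?_⟩
  intro x y
  by_cases hx : x = ⊥
  · subst hx; rw [bot_sup_eq, dpcF_bot, bot_sup_eq]
  by_cases hy : y = ⊥
  · subst hy; rw [sup_bot_eq, dpcF_bot, sup_bot_eq]
  have hxy : x ⊔ y ≠ ⊥ := fun h =>
    hx (le_bot_iff.mp (le_sup_left.trans h.le))
  by_cases hj : ∃ d ∈ D, x ⊔ y ≤ d
  · obtain ⟨d, hd, hled⟩ := hj
    rw [dpcF_val hD hxy hd hled, dpcF_val hD hx hd (le_sup_left.trans hled),
      dpcF_val hD hy hd (le_sup_right.trans hled), sup_idem]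
  · rw [dpcF_top hxy hj]
    by_cases hjx : ∃ d ∈ D, x ≤ d
    · obtain ⟨d1, hd1, hled1⟩ := hjx
      by_cases hjy : ∃ d ∈ D, y ≤ d
      · obtain ⟨d2, hd2, hled2⟩ := hjy
        have hne : d1 ≠ d2 := by
          rintro rfl
          exact hj ⟨d1, hd1, sup_le hled1 hled2⟩
        rw [dpcF_val hD hx hd1 hled1, dpcF_val hD hy hd2 hled2, ← compl_inf,
          hD hd1 hd2 hne, compl_bot]
      · rw [dpcF_top hy hjy, sup_top_eq]
    · rw [dpcF_top hx hjx, top_sup_eq]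

/-- Forward direction: dual pseudocomplements give completeness. -/
lemma complete_of_dpc [Nontrivial α]
    (H : ∀ f : α → α, IsModal f → ∃ g : α → α, IsDualPC f g)
    (M : Set α) : ∃ s : α, IsLUB M s := by
  -- Zorn: a maximal pairwise-disjoint family of nonzero elements below members of M.
  set S : Set (Set α) := {D | (∀ d ∈ D, d ≠ ⊥) ∧ (∀ d ∈ D, ∃ m ∈ M, d ≤ m) ∧
      D.Pairwise (fun a b => a ⊓ b = ⊥)} with hSdef
  obtain ⟨D, hDmax⟩ : ∃ D, Maximal (· ∈ S) D := by
    apply zorn_subset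
    intro c hcS hchain
    refine ⟨⋃₀ c, ⟨?_, ?_, ?_⟩, fun s hs => Set.subset_sUnion_of_mem hs⟩
    · rintro d ⟨t, htc, hdt⟩
      exact (hcS htc).1 d hdt
    · rintro d ⟨t, htc, hdt⟩
      exact (hcS htc).2.1 d hdt
    · rintro a ⟨t, htc, hat⟩ b ⟨u, huc, hbu⟩ hab
      rcases hchain.total htc huc with h | h
      · exact (hcS huc).2.2 (h hat) hbu hab
      · exact (hcS htc).2.2 hat (h hbu) hab
  obtain ⟨hDne, hDbd, hDdisj⟩ := hDmax.1
  obtain ⟨g, hgmodal, hgcomp, hgleast⟩ := H (dpcF D) (dpcF_modal hDdisj)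
  refine ⟨g ⊤, ?_, ?_⟩
  · -- g ⊤ is an upper bound of M
    have hdle : ∀ d ∈ D, d ≤ g ⊤ := by
      intro d hd
      have hdne := hDne d hd
      have h1 : dpcF D d = dᶜ := dpcF_val hDdisj hdne hd le_rfl
      have h2 : (dpcF D d)ᶜ ≤ g d := compl_le_of_sup_eq_top (hgcomp d hdne)
      rw [h1, compl_compl] at h2
      exact h2.trans (hgmodal.mono' le_top)
    intro m hm
    by_contra hmle
    set t := m ⊓ (g ⊤)ᶜ with ht
    have htne : t ≠ ⊥ := by
      intro h
      rw [ht, ← sdiff_eq] at h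
      exact hmle (sdiff_eq_bot_iff.mp h)
    have htD : t ∉ D := by
      intro hmemD
      have := le_inf (hdle t hmemD) (ht ▸ inf_le_right : t ≤ (g ⊤)ᶜ)
      rw [inf_compl_eq_bot] at this
      exact htne (le_bot_iff.mp this)
    have hins : insert t D ∈ S := by
      refine ⟨?_, ?_, ?_⟩
      · rintro d (rfl | hd)
        · exact htne
        · exact hDne d hd
      · rintro d (rfl | hd)
        · exact ⟨m, hm, inf_le_left⟩
        · exact hDbd d hd
      · rw [Set.pairwise_insert]
        refine ⟨hDdisj, fun d hd _ => ⟨?_, ?_⟩⟩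
        · have : t ⊓ d ≤ (g ⊤)ᶜ ⊓ g ⊤ :=
            inf_le_inf (ht ▸ inf_le_right) (hdle d hd)
          rw [compl_inf_eq_bot] at this
          exact le_bot_iff.mp this
        · have : d ⊓ t ≤ g ⊤ ⊓ (g ⊤)ᶜ :=
            inf_le_inf (hdle d hd) (ht ▸ inf_le_right)
          rw [inf_compl_eq_bot] at this
          exact le_bot_iff.mp this
    have := hDmax.2 hins (Set.subset_insert t D)
    exact htD (this (Set.mem_insert t D))
  · -- g ⊤ is below every upper bound u of M
    intro u hu
    set h : α → α := fun z => if z = ⊥ then ⊥ else u with hh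
    have hhmodal : IsModal h := by
      refine ⟨if_pos rfl, ?_⟩
      intro x y
      by_cases hx : x = ⊥
      · subst hx; simp [hh]
      by_cases hy : y = ⊥
      · subst hy; simp [hh, hx]
      have hxy : x ⊔ y ≠ ⊥ := fun hc =>
        hx (le_bot_iff.mp (le_sup_left.trans hc.le))
      simp [hh, hx, hy, hxy]
    have hhcomp : IsCompanion (dpcF D) h := by
      intro z hz
      have hle : (dpcF D z)ᶜ ≤ h z := by
        rw [hh]
        simp only [if_neg hz]
        by_cases hjz : ∃ d ∈ D, z ≤ d
        · obtain ⟨d, hd, hled⟩ := hjz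
          rw [dpcF_val hDdisj hz hd hled, compl_compl]
          obtain ⟨m, hm, hdm⟩ := hDbd d hd
          exact hdm.trans (hu hm)
        · rw [dpcF_top hz hjz, compl_top]
          exact bot_le
      have := sup_le_sup_left hle (dpcF D z)
      rw [sup_compl_eq_top] at this
      exact top_le_iff.mp this
    have := hgleast h hhmodal hhcomp ⊤
    simpa [hh] using this
end Aux

/-- The semilattice of modal operators on `B` is dually pseudocomplemented iff `B` is
complete. -/
theorem dually_pseudocomplemented_iff_complete {α : Type*} [BooleanAlgebra α] [Nontrivial α] :
    (∀ f : α → α, IsModal f → ∃ g : α → α, IsDualPC f g) ↔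
    (∀ M : Set α, ∃ s : α, IsLUB M s) := by
  exact ⟨fun H => complete_of_dpc H, fun H => dpc_of_complete H⟩
end

section
/- A bimodal algebra ⟨B, f, g⟩ is a discriminator decomposition algebra (i.e., f(x) + g(x) = 1 for all x ≠ 0) if and only if the union of the canonical relations R_f and R_g is the full relation on the set of ultrafilters of B. -/
/-- An ultrafilter of a Boolean algebra, as a set of elements. -/
def IsUltrafilter {α : Type*} [BooleanAlgebra α] (F : Set α) : Prop :=
  (⊥ : α) ∉ F ∧ (∀ x ∈ F, ∀ y : α, x ≤ y → y ∈ F) ∧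
  (∀ x ∈ F, ∀ y ∈ F, x ⊓ y ∈ F) ∧ (∀ x : α, x ∈ F ∨ xᶜ ∈ F)

lemma isModal_mono {α : Type*} [BooleanAlgebra α] {f : α → α} (hf : IsModal f)
    {x y : α} (h : x ≤ y) : f x ≤ f y := by
  have : f (x ⊔ y) = f x ⊔ f y := hf.2 x y
  rw [sup_eq_right.mpr h] at this
  rw [this]; exact le_sup_left

/-- Any nonzero element lies in some ultrafilter. -/
lemma exists_ultrafilter_mem {α : Type*} [BooleanAlgebra α] (a : α) (ha : a ≠ ⊥) :
    ∃ F : Set α, IsUltrafilter F ∧ a ∈ F := by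
  classical
  set S : Set (Set α) := {F | (⊥ : α) ∉ F ∧ (∀ x ∈ F, ∀ y : α, x ≤ y → y ∈ F) ∧
    (∀ x ∈ F, ∀ y ∈ F, x ⊓ y ∈ F) ∧ a ∈ F} with hS
  have h0 : {y : α | a ≤ y} ∈ S := by
    refine ⟨fun h => ha (le_bot_iff.mp h), ?_, ?_, le_refl a⟩
    · exact fun x hx y hxy => le_trans hx hxy
    · exact fun x hx y hy => le_inf hx hy
  obtain ⟨F, hFsub, hFmax⟩ := zorn_subset_nonempty S (fun c hc hchain hne => by
    refine ⟨⋃₀ c, ⟨?_, ?_, ?_, ?_⟩, fun s hs => Set.subset_sUnion_of_mem hs⟩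
    · rintro ⟨t, htc, hbt⟩; exact (hc htc).1 hbt
    · rintro x ⟨t, htc, hxt⟩ y hxy; exact ⟨t, htc, (hc htc).2.1 x hxt y hxy⟩
    · rintro x ⟨t, htc, hxt⟩ y ⟨u, huc, hyu⟩
      rcases hchain.total htc huc with h | h
      · exact ⟨u, huc, (hc huc).2.2.1 x (h hxt) y hyu⟩
      · exact ⟨t, htc, (hc htc).2.2.1 x hxt y (h hyu)⟩
    · obtain ⟨t, htc⟩ := hne; exact ⟨t, htc, (hc htc).2.2.2⟩) _ h0
  obtain ⟨hFbot, hFup, hFinf, hFa⟩ := hFmax.1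
  refine ⟨F, ⟨hFbot, hFup, hFinf, ?_⟩, hFa⟩
  intro x
  by_contra h
  push_neg at h
  obtain ⟨hx, hxc⟩ := h
  -- extend F by x
  set F' : Set α := {y | ∃ b ∈ F, b ⊓ x ≤ y} with hF'
  have hFF' : F ⊆ F' := fun y hy => ⟨y, hy, inf_le_left⟩
  have hF'S : F' ∈ S := by
    refine ⟨?_, ?_, ?_, hFF' hFa⟩
    · rintro ⟨b, hb, hbx⟩
      have : b ≤ xᶜ := by
        have := le_bot_iff.mp hbx
        exact le_compl_iff_disjoint_right.mpr (disjoint_iff.mpr this)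
      exact hxc (hFup b hb xᶜ this)
    · rintro y ⟨b, hb, hbx⟩ z hyz; exact ⟨b, hb, le_trans hbx hyz⟩
    · rintro y ⟨b, hb, hbx⟩ z ⟨c, hc, hcx⟩
      exact ⟨b ⊓ c, hFinf b hb c hc, by
        calc b ⊓ c ⊓ x ≤ (b ⊓ x) ⊓ (c ⊓ x) := by
              apply le_inf
              · exact inf_le_inf_right x inf_le_left
              · exact inf_le_inf_right x inf_le_right
          _ ≤ y ⊓ z := inf_le_inf hbx hcx⟩
  have hxF' : x ∈ F' := ⟨a, hFa, inf_le_right⟩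
  exact hx (hFmax.2 hF'S hFF' hxF')

/-- A bimodal algebra `⟨B, f, g⟩` is a discriminator decomposition algebra iff the union
of the canonical relations `R_f` and `R_g` is the full relation on ultrafilters. -/
theorem dda_iff_canonical_union {α : Type*} [BooleanAlgebra α] [Nontrivial α]
    (f g : α → α) (hf : IsModal f) (hg : IsModal g) :
    (∀ x : α, x ≠ ⊥ → f x ⊔ g x = ⊤) ↔
    (∀ F G : Set α, IsUltrafilter F → IsUltrafilter G →
      (∀ a ∈ G, f a ∈ F) ∨ (∀ a ∈ G, g a ∈ F)) := by
  constructor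
  · intro h F G hF hG
    by_contra hc
    push_neg at hc
    obtain ⟨⟨a, haG, hfa⟩, ⟨b, hbG, hgb⟩⟩ := hc
    have hab : a ⊓ b ∈ G := hG.2.2.1 a haG b hbG
    have habne : a ⊓ b ≠ ⊥ := fun he => hG.1 (he ▸ hab)
    have htop : f (a ⊓ b) ⊔ g (a ⊓ b) = ⊤ := h _ habne
    -- ⊤ ∈ F
    have htopF : (⊤ : α) ∈ F := by
      rcases hF.2.2.2 ⊤ with h | h
      · exact h
      · exact ((show (⊥:α) ∈ F by simpa using h) |> hF.1).elim
    have hsupF : f (a ⊓ b) ⊔ g (a ⊓ b) ∈ F := htop ▸ htopF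
    -- primality
    have prime : f (a ⊓ b) ∈ F ∨ g (a ⊓ b) ∈ F := by
      rcases hF.2.2.2 (f (a ⊓ b)) with h1 | h1
      · exact Or.inl h1
      · right
        have := hF.2.2.1 _ h1 _ hsupF
        refine hF.2.1 _ this _ ?_
        rw [inf_sup_left]
        simp
    rcases prime with h1 | h1
    · exact hfa (hF.2.1 _ h1 _ (isModal_mono hf inf_le_left))
    · exact hgb (hF.2.1 _ h1 _ (isModal_mono hg inf_le_right))
  · intro h x hx
    by_contra hne
    have hcne : (f x ⊔ g x)ᶜ ≠ ⊥ := by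
      intro he
      exact hne (by simpa using congrArg compl he)
    obtain ⟨F, hF, hcF⟩ := exists_ultrafilter_mem _ hcne
    obtain ⟨G, hG, hxG⟩ := exists_ultrafilter_mem x hx
    have : f x ∈ F ∨ g x ∈ F := by
      rcases h F G hF hG with h1 | h1
      · exact Or.inl (h1 x hxG)
      · exact Or.inr (h1 x hxG)
    rcases this with h1 | h1
    · have : f x ⊓ (f x ⊔ g x)ᶜ ∈ F := hF.2.2.1 _ h1 _ hcF
      have hb : f x ⊓ (f x ⊔ g x)ᶜ = ⊥ := by
        rw [compl_sup]
        rw [← inf_assoc]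
        simp
      exact hF.1 (hb ▸ this)
    · have : g x ⊓ (f x ⊔ g x)ᶜ ∈ F := hF.2.2.1 _ h1 _ hcF
      have hb : g x ⊓ (f x ⊔ g x)ᶜ = ⊥ := by
        rw [compl_sup, inf_comm (f x)ᶜ, ← inf_assoc]
        simp
      exact hF.1 (hb ▸ this)
end

section
/- Let f and g be modal operators on a Boolean algebra B forming a decomposing pair (f(x) + g(x) = 1 for all x ≠ 0). If f and g are dual pseudocomplements of each other in the semilattice of modal operators, then ⟨f, g⟩ is a minimal decomposing pair (no decomposing pair ⟨f', g'⟩ with f' ≤ f and g' ≤ g other than ⟨f, g⟩ itself). -/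
/-- If the modal operators `f, g` form a decomposing pair and are dual
pseudocomplements of each other, then `⟨f, g⟩` is a minimal decomposing pair. -/
theorem mutual_dualPC_minimal_pair {α : Type*} [BooleanAlgebra α] (f g : α → α)
    (hf : IsModal f) (hg : IsModal g) (hfg : IsCompanion f g)
    (h1 : IsDualPC f g) (h2 : IsDualPC g f) :
    ∀ f' g' : α → α, IsModal f' → IsModal g' → IsCompanion f' g' →
      f' ≤ f → g' ≤ g → f' = f ∧ g' = g := by
  intro f' g' hf' hg' hc hle1 hle2
  have hc1 : IsCompanion f g' := fun x hx =>
    top_le_iff.mp ((hc x hx).symm.le.trans (sup_le_sup (hle1 x) le_rfl))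
  have hc2 : IsCompanion g f' := fun x hx => by
    have h := hc x hx
    rw [sup_comm] at h
    exact top_le_iff.mp (h.symm.le.trans (sup_le_sup (hle2 x) le_rfl))
  exact ⟨le_antisymm hle1 (h2.2.2 f' hf' hc2), le_antisymm hle2 (h1.2.2 g' hg' hc1)⟩
end

section
/- A modal operator f on a Boolean algebra B has a proper companion (a modal operator g ≠ f¹ with f(x) + g(x) = 1 for all x ≠ 0) if and only if there exist x ≠ 0 and z ≠ 0 in B such that z ≤ f(y) for every y with 0 < y ≤ x. -/
open Classical

/-- The unary discriminator. -/
noncomputable def disc {α : Type*} [BooleanAlgebra α] (x : α) : α :=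
  if x = ⊥ then ⊥ else ⊤

/-- `g` is a proper companion of `f`: a modal operator distinct from the unary
discriminator whose join with `f` is the unary discriminator. -/
def HasProperCompanion {α : Type*} [BooleanAlgebra α] (f : α → α) : Prop :=
  ∃ g : α → α, IsModal g ∧ g ≠ disc ∧ ∀ x : α, x ≠ ⊥ → f x ⊔ g x = ⊤

/-- A modal operator `f` has a proper companion iff there are `x ≠ ⊥` and `z ≠ ⊥` with
`z ≤ f y` for every `y` with `⊥ < y ≤ x`. -/
theorem hasProperCompanion_iff {α : Type*} [BooleanAlgebra α] [Nontrivial α]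
    (f : α → α) (hf : IsModal f) :
    HasProperCompanion f ↔
    ∃ x z : α, x ≠ ⊥ ∧ z ≠ ⊥ ∧ ∀ y : α, y ≠ ⊥ → y ≤ x → z ≤ f y := by
  constructor
  · rintro ⟨g, ⟨hg0, hgadd⟩, hgne, hcomp⟩
    obtain ⟨w, hw⟩ : ∃ w, g w ≠ disc w := by
      by_contra h
      push_neg at h
      exact hgne (funext h)
    have hwbot : w ≠ ⊥ := by
      rintro rfl
      apply hw
      simp [disc, hg0]
    have hgw : g w ≠ ⊤ := by
      intro h
      apply hw
      simp [disc, hwbot, h]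
    refine ⟨w, (g w)ᶜ, hwbot, fun h => hgw (by simpa using congrArg compl h), ?_⟩
    intro y hy hyw
    have hmono : g y ≤ g w := by
      have : g w = g y ⊔ g w := by
        rw [← hgadd]; rw [sup_eq_right.mpr hyw]
      rw [this]; exact le_sup_left
    have htop : f y ⊔ g y = ⊤ := hcomp y hy
    calc (g w)ᶜ ≤ (g y)ᶜ := compl_le_compl hmono
      _ = (g y)ᶜ ⊓ (f y ⊔ g y) := by rw [htop, inf_top_eq]
      _ = (g y)ᶜ ⊓ f y := by rw [inf_sup_left, compl_inf_eq_bot, sup_bot_eq]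
      _ ≤ f y := inf_le_right
  · rintro ⟨x, z, hx, hz, hzf⟩
    refine ⟨fun w => (disc w ⊓ zᶜ) ⊔ disc (w ⊓ xᶜ), ⟨?_, ?_⟩, ?_, ?_⟩
    · simp [disc]
    · intro a b
      have hd : ∀ u v : α, disc (u ⊔ v) = disc u ⊔ disc v := by
        intro u v
        by_cases hu : u = ⊥ <;> by_cases hv : v = ⊥ <;>
          simp [disc, hu, hv, sup_eq_bot_iff]
      dsimp only
      rw [hd, inf_sup_right, inf_sup_right, hd]
      ac_rfl
    · intro h
      have := congrFun h x
      simp [disc, hx, inf_compl_self] at this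
      -- this : zᶜ = ⊤
      exact hz (by simpa using congrArg compl this)
    · intro w hw
      by_cases hwx : w ⊓ xᶜ = ⊥
      · have hwle : w ≤ x := by
          have h1 : w = w ⊓ x := by
            conv_lhs => rw [← inf_top_eq w, ← sup_compl_eq_top (x := x)]
            rw [inf_sup_left, hwx, sup_bot_eq]
          rw [h1]; exact inf_le_right
        have hzfw : z ≤ f w := hzf w hw hwle
        have : f w ⊔ (disc w ⊓ zᶜ) = ⊤ := by
          rw [eq_top_iff]
          calc (⊤ : α) = z ⊔ zᶜ := (sup_compl_eq_top).symm
            _ ≤ f w ⊔ (disc w ⊓ zᶜ) := by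
                apply sup_le_sup hzfw
                simp [disc, hw]
        rw [← sup_assoc, this, top_sup_eq]
      · simp [disc, hwx]
end

section
/- A modal operator f on a Boolean algebra B has no proper companion if and only if for every x ≠ 0 the infimum of { f(y) : 0 < y ≤ x } exists in B and equals 0. -/
open Classical

/-- A modal operator `f` has no proper companion iff for every `x ≠ ⊥` the infimum of
`{ f y : ⊥ < y ≤ x }` exists and equals `⊥`. -/
theorem no_properCompanion_iff_glb_bot {α : Type*} [BooleanAlgebra α] [Nontrivial α]
    (f : α → α) (hf : IsModal f) :
    ¬ HasProperCompanion f ↔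
    ∀ x : α, x ≠ ⊥ → IsGLB {z : α | ∃ y : α, y ≠ ⊥ ∧ y ≤ x ∧ z = f y} ⊥ := by
  constructor
  · intro hnc x hx
    constructor
    · intro z _; exact bot_le
    · intro b hb
      by_contra hble
      have hbne : b ≠ ⊥ := fun h => hble (h ▸ le_rfl)
      apply hnc
      refine ⟨fun z => if z = ⊥ then ⊥ else if z ≤ x then bᶜ else ⊤, ⟨by simp, ?_⟩, ?_, ?_⟩
      · intro u v
        by_cases hu : u = ⊥
        · simp [hu]
        by_cases hv : v = ⊥
        · simp [hv]
        have huv : u ⊔ v ≠ ⊥ := fun h => hu (by simpa using le_antisymm (h ▸ le_sup_left) bot_le)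
        by_cases hux : u ≤ x
        · by_cases hvx : v ≤ x
          · simp [hu, hv, huv, hux, hvx, sup_le hux hvx]
          · have : ¬ (u ⊔ v ≤ x) := fun h => hvx (le_trans le_sup_right h)
            simp [hu, hv, huv, hux, hvx, this]
        · have : ¬ (u ⊔ v ≤ x) := fun h => hux (le_trans le_sup_left h)
          simp [hu, hv, huv, hux, this]
      · intro heq
        have := congrFun heq x
        simp [disc, hx] at this
        exact hbne this
      · intro z hz
        by_cases hzx : z ≤ x
        · have hbf : b ≤ f z := hb ⟨z, hz, hzx, rfl⟩
          simp only [hz, hzx, if_false, if_true]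
          exact top_le_iff.mp (by calc ⊤ = b ⊔ bᶜ := (sup_compl_eq_top).symm
            _ ≤ f z ⊔ bᶜ := sup_le_sup_right hbf _)
        · simp [hz, hzx]
  · rintro hglb ⟨g, ⟨hg0, hgadd⟩, hgd, hcomp⟩
    apply hgd
    funext z
    by_cases hz : z = ⊥
    · simp [hz, hg0, disc]
    · simp only [disc, hz, if_false]
      have hlb : (g z)ᶜ ∈ lowerBounds {w : α | ∃ y : α, y ≠ ⊥ ∧ y ≤ z ∧ w = f y} := by
        rintro w ⟨y, hy, hyz, rfl⟩
        have hmono : g y ≤ g z := by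
          have : g z = g y ⊔ g z := by rw [← hgadd, sup_eq_right.mpr hyz]
          exact this ▸ le_sup_left
        have hfy : (g y)ᶜ ≤ f y := by
          have h := hcomp y hy
          calc (g y)ᶜ = (g y)ᶜ ⊓ (f y ⊔ g y) := by rw [h, inf_top_eq]
            _ = ((g y)ᶜ ⊓ f y) ⊔ ((g y)ᶜ ⊓ g y) := inf_sup_left _ _ _
            _ ≤ f y := by simp
        exact le_trans (compl_le_compl hmono) hfy
      have := (hglb z hz).2 hlb
      have : (g z)ᶜ = ⊥ := le_bot_iff.mp this
      simpa using congrArg compl this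
end

section
/- Let B be an atomless Boolean algebra and f a modal operator on B that is n-transitive (f^{n+1}(x) ≤ f^n(x) for all x) for some n ≥ 1. If the image f^n[B] is dense in B (for every z ≠ 0 there exists t with 0 < f^n(t) ≤ z), then f has no proper companion. -/
open Classical

/-- If `B` is atomless and `f` is `n`-transitive for some `n ≥ 1`, and `fⁿ[B]` is dense
in `B`, then `f` has no proper companion. -/
theorem atomless_nTransitive_dense_no_properCompanion {α : Type*} [BooleanAlgebra α]
    [Nontrivial α] (hatomless : ∀ a : α, ¬ IsAtom a)
    (f : α → α) (hf : IsModal f) (n : ℕ) (hn : 1 ≤ n)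
    (htrans : ∀ x : α, f^[n + 1] x ≤ f^[n] x)
    (hdense : ∀ z : α, z ≠ ⊥ → ∃ t : α, f^[n] t ≠ ⊥ ∧ f^[n] t ≤ z) :
    ¬ HasProperCompanion f := by
  rintro ⟨g, ⟨hg0, hgadd⟩, hgne, hcomp⟩
  -- g is monotone
  have hgmono : ∀ {a b : α}, a ≤ b → g a ≤ g b := by
    intro a b hab
    have h1 : g b = g a ⊔ g b := by
      conv_lhs => rw [← sup_eq_right.mpr hab, hgadd]
    rw [h1]; exact le_sup_left
  -- since g ≠ disc there is x ≠ ⊥ with g x ≠ ⊤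
  have hex : ∃ x : α, x ≠ ⊥ ∧ g x ≠ ⊤ := by
    by_contra h
    push_neg at h
    apply hgne
    funext y
    by_cases hy : y = ⊥
    · simp [disc, hy, hg0]
    · simp [disc, hy, h y hy]
  obtain ⟨x, hx, hgx⟩ := hex
  set u := (g x)ᶜ with hu
  have hune : u ≠ ⊥ := by
    simpa [hu, compl_eq_bot] using hgx
  -- key: if fⁿ r ≠ ⊥ and fⁿ r ≤ x then u ≤ fⁿ r
  have key : ∀ r : α, f^[n] r ≠ ⊥ → f^[n] r ≤ x → u ≤ f^[n] r := by
    intro r hne hle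
    have hfe : f (f^[n] r) ≤ f^[n] r := by
      have h1 := htrans r
      rwa [Function.iterate_succ_apply'] at h1
    have h2 : f^[n] r ⊔ g x = ⊤ := by
      have h3 : f (f^[n] r) ⊔ g (f^[n] r) ≤ f^[n] r ⊔ g x :=
        sup_le_sup hfe (hgmono hle)
      rw [hcomp (f^[n] r) hne] at h3
      exact top_le_iff.mp h3
    have h4 : u = u ⊓ (f^[n] r ⊔ g x) := by rw [h2, inf_top_eq]
    have h5 : u ⊓ g x = ⊥ := by rw [hu]; exact compl_inf_eq_bot
    calc u = u ⊓ f^[n] r ⊔ u ⊓ g x := by rw [← inf_sup_left, ← h4]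
    _ = u ⊓ f^[n] r := by rw [h5, sup_bot_eq]
    _ ≤ f^[n] r := inf_le_right
  -- step 1: u ≤ x
  obtain ⟨s₀, hs₀ne, hs₀le⟩ := hdense x hx
  have hux : u ≤ x := (key s₀ hs₀ne hs₀le).trans hs₀le
  -- step 2: d = fⁿ s ≤ u
  obtain ⟨s, hsne, hsle⟩ := hdense u hune
  -- step 3: split d using atomlessness
  have hnatom := hatomless (f^[n] s)
  rw [IsAtom] at hnatom
  push_neg at hnatom
  obtain ⟨d₁, hd₁lt, hd₁ne⟩ := hnatom hsne
  -- step 4: e = fⁿ r ≤ d₁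
  obtain ⟨r, hrne, hrle⟩ := hdense d₁ hd₁ne
  have hrx : f^[n] r ≤ x := hrle.trans (hd₁lt.le.trans (hsle.trans hux))
  have : f^[n] s ≤ d₁ := hsle.trans ((key r hrne hrx).trans hrle)
  exact absurd (lt_of_le_of_lt this hd₁lt) (lt_irrefl _)
end
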